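/- arXiv:2603.28650 — 6 statements merged into one kernel-verified Lean document; each statement's English description precedes it below -/
import Mathlib

section
/- Let P⁺ and P⁻ be probability measures on a measurable space with P⁺ ≪ P⁻. Let p > 1 and c > 0, and suppose there exists α₀ > p/(p−1) with ∫ (dP⁺/dP⁻)^{α₀} dP⁻ < ∞. Then for any sequence of measurable sets (A_n)_{n≥1} satisfying P⁻(A_n) ≤ c·n^{−p} for all n, the series ∑_{n=1}^∞ P⁺(A_n) converges. In particular, bounded cumulative risk under any power-law schedule forces bounded cumulative utility: no sequence of classifiers can have ∑ δ_n < ∞ with δ_n = O(n^{−p}) while ∑ TPR_n = ∞. -/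
open MeasureTheory
open scoped ENNReal

/-!
Hölder's inequality with exponents `α, β = α / (α - 1)` applied to `P (A) = ∫_A dP/dQ dQ`
gives `P (A) ≤ ‖dP/dQ‖_{L^α(Q)} · Q (A) ^ (1 - 1/α)`. Under the schedule `Q (A n) ≤ c n^{-p}`
the right-hand side is `O(n^{-p (1 - 1/α)})`, and `α > p / (p - 1)` is exactly the condition
`p (1 - 1/α) > 1` making this a convergent `p`-series.
-/

theorem MeasureTheory.Measure.apply_le_lintegral_rnDeriv_rpow_mul {α : Type*}
    [MeasurableSpace α] {μ ν : Measure α} [μ.HaveLebesgueDecomposition ν] (hμν : μ ≪ ν) {p q : ℝ}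
    (hpq : p.HolderConjugate q) {s : Set α} (hs : MeasurableSet s) :
    μ s ≤ (∫⁻ x, μ.rnDeriv ν x ^ p ∂ν) ^ (1 / p) * ν s ^ (1 / q) := by
  have holder := ENNReal.lintegral_mul_le_Lp_mul_Lq (ν.restrict s) hpq
    (μ.measurable_rnDeriv ν).aemeasurable aemeasurable_const (g := 1)
  simp only [mul_one, Pi.one_apply, ENNReal.one_rpow, lintegral_const,
    Measure.restrict_apply_univ, one_mul, Measure.setLIntegral_rnDeriv' hμν hs] at holder
  refine holder.trans (mul_le_mul_left ?_ _)
  exact ENNReal.rpow_le_rpow (setLIntegral_le_lintegral _ _) (by simp [hpq.nonneg])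

theorem ENNReal.tsum_rpow_ne_top_of_le_ofReal_mul_rpow {u : ℕ → ℝ≥0∞} {c p r : ℝ}
    (hc : 0 ≤ c) (hr : 0 ≤ r) (hpr : 1 < p * r)
    (hu : ∀ n : ℕ, u n ≤ ENNReal.ofReal (c * ((n : ℝ) + 1) ^ (-p))) :
    ∑' n, u n ^ r ≠ ∞ := by
  have hsummable : Summable fun n : ℕ => c ^ r * ((n : ℝ) + 1) ^ (-(p * r)) := by
    refine Summable.mul_left _ ?_
    exact_mod_cast (summable_nat_add_iff 1).mpr (Real.summable_nat_rpow.mpr (by linarith))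
  refine ne_top_of_le_ne_top hsummable.tsum_ofReal_ne_top (ENNReal.tsum_le_tsum fun n => ?_)
  calc u n ^ r ≤ ENNReal.ofReal (c * ((n : ℝ) + 1) ^ (-p)) ^ r := ENNReal.rpow_le_rpow (hu n) hr
    _ = ENNReal.ofReal (c ^ r * ((n : ℝ) + 1) ^ (-(p * r))) := by
      rw [ENNReal.ofReal_rpow_of_nonneg (by positivity) hr, Real.mul_rpow hc (by positivity),
        ← Real.rpow_mul (by positivity), neg_mul]

theorem one_lt_mul_one_sub_inv_of_div_sub_one_lt {p α : ℝ} (hp : 1 < p)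
    (hα : p / (p - 1) < α) : 1 < p * (1 - α⁻¹) := by
  have hp₀ : 0 < p - 1 := by linarith
  have hinv : α⁻¹ < (p - 1) / p := by
    simpa using inv_strictAnti₀ (by positivity) hα
  calc 1 = p * (1 - (p - 1) / p) := by field_simp; ring
    _ < p * (1 - α⁻¹) := by gcongr

/-- Safety–utility impossibility: if `P ≪ Q`, `p > 1`, `c > 0`, and the Rényi
integral `∫ (dP/dQ)^{α₀} dQ` is finite for some `α₀ > p/(p-1)`, then for any
sequence of measurable acceptance regions `A n` (indexed so that step `n ≥ 1`
corresponds to `A (n-1)`) whose false acceptance rates obey the power-law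
schedule `Q (A n) ≤ c · n^{-p}`, the total true positive rate `∑ P (A n)` is
finite: bounded cumulative risk forces bounded cumulative utility. -/
theorem classification_impossibility_power_law {Ω : Type*} [MeasurableSpace Ω]
    (P Q : Measure Ω) [IsProbabilityMeasure P] [IsProbabilityMeasure Q]
    (hac : P ≪ Q) (p c : ℝ) (hp : 1 < p) (hc : 0 < c)
    (α₀ : ℝ) (hα₀ : p / (p - 1) < α₀)
    (hfin : ∫⁻ x, (P.rnDeriv Q x) ^ α₀ ∂Q ≠ ∞)
    (A : ℕ → Set Ω) (hA : ∀ n, MeasurableSet (A n))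
    (hδ : ∀ n : ℕ, Q (A n) ≤ ENNReal.ofReal (c * ((n : ℝ) + 1) ^ (-p))) :
    ∑' n : ℕ, P (A n) ≠ ∞ := by
  have hα₁ : 1 < α₀ := ((one_lt_div (by linarith)).mpr (by linarith)).trans hα₀
  have hconj : α₀.HolderConjugate α₀.conjExponent := .conjExponent hα₁
  have hr : 1 / α₀.conjExponent = 1 - α₀⁻¹ := by rw [one_div, hconj.one_sub_inv]
  set M := (∫⁻ x, P.rnDeriv Q x ^ α₀ ∂Q) ^ (1 / α₀)
  have hM : M ≠ ∞ := ENNReal.rpow_ne_top_of_nonneg (by positivity) hfin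
  have hPA : ∀ n, P (A n) ≤ M * Q (A n) ^ (1 - α₀⁻¹) := fun n => by
    simpa only [hr] using Measure.apply_le_lintegral_rnDeriv_rpow_mul hac hconj (hA n)
  have hQA : ∑' n, Q (A n) ^ (1 - α₀⁻¹) ≠ ∞ :=
    ENNReal.tsum_rpow_ne_top_of_le_ofReal_mul_rpow hc.le
      (sub_nonneg.mpr (inv_le_one_of_one_le₀ hα₁.le))
      (one_lt_mul_one_sub_inv_of_div_sub_one_lt hp hα₀) hδ
  refine ne_top_of_le_ne_top ?_ (ENNReal.tsum_le_tsum hPA)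
  rw [ENNReal.tsum_mul_left]
  exact ENNReal.mul_ne_top hM hQA
end

section
/- Fix Δ > 0, set β* = 2/(2 + Δ²) and C* = exp(Δ²/2). Then the ratio N(Δ,1)({x : x ≥ t}) / (C* · (N(0,1)({x : x ≥ t}))^{β*}) tends to 0 as t → ∞, where N(μ,1) denotes the Gaussian measure on ℝ with mean μ and variance 1. That is, the Neyman–Pearson true positive rate decays strictly faster than the Hölder ceiling C_{α*}·δ^{β*} as the false acceptance rate δ → 0. -/
/-! The Chernoff bound gives `N(μ,v)[t,∞) ≤ exp(-(t-μ)²/(2v))` for `t ≥ μ`, while integrating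
the density over `[t, t+1]` gives `N(ν,v)[t,∞) ≥ φ_{ν,v}(t+1)`, which is of order
`exp(-(t+1-ν)²/(2v))`. So `N(μ,v)[t,∞) / N(ν,v)[t,∞)^β` is bounded by the exponential of a
quadratic in `t` with leading coefficient `(β-1)/(2v)`, and tends to `0` whenever `0 ≤ β < 1`.
For the theorem, `β* = 2/(2+Δ²) < 1` because `Δ ≠ 0`, and the constant `C*` is irrelevant. -/

open MeasureTheory ProbabilityTheory
open scoped ENNReal NNReal
open Real Filter Topology

lemma tendsto_quadratic_atBot {a b c : ℝ} (ha : a < 0) :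
    Tendsto (fun t : ℝ => a * t ^ 2 + b * t + c) atTop atBot := by
  have hlin : Tendsto (fun t : ℝ => a * t + b) atTop atBot :=
    tendsto_atBot_add_const_right _ b (tendsto_id.const_mul_atTop_of_neg ha)
  refine tendsto_atBot_add_const_right _ c (tendsto_id.atTop_mul_atBot₀ hlin) |>.congr fun t => ?_
  simp only [id]
  ring

namespace ProbabilityTheory

lemma gaussianReal_real_Ici_le_exp (μ : ℝ) (v : ℝ≥0) {t : ℝ} (ht : μ ≤ t) :
    (gaussianReal μ v).real {x | t ≤ x} ≤ exp (-(t - μ) ^ 2 / (2 * v)) := by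
  -- Chernoff bound at the optimal parameter `(t - μ) / v`
  have h := measure_ge_le_exp_mul_mgf (X := id) t (div_nonneg (sub_nonneg.2 ht) v.coe_nonneg)
    (integrable_exp_mul_gaussianReal (μ := μ) (v := v) _)
  rw [mgf_id_gaussianReal, ← exp_add] at h
  refine h.trans_eq (congrArg exp ?_)
  rcases eq_or_ne (v : ℝ) 0 with hv | hv
  · simp [hv]
  · field_simp
    ring

lemma gaussianPDFReal_le_of_sq_le (μ : ℝ) (v : ℝ≥0) {x y : ℝ}
    (h : (x - μ) ^ 2 ≤ (y - μ) ^ 2) : gaussianPDFReal μ v y ≤ gaussianPDFReal μ v x := by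
  unfold gaussianPDFReal
  gcongr

lemma gaussianPDFReal_le_gaussianReal_real_Ici (μ : ℝ) (v : ℝ≥0) {t : ℝ} (ht : μ ≤ t) :
    gaussianPDFReal μ v (t + 1) ≤ (gaussianReal μ v).real {x | t ≤ x} := by
  rcases eq_or_ne v 0 with rfl | hv
  · simp
  calc gaussianPDFReal μ v (t + 1)
      = ∫ _ in Set.Icc t (t + 1), gaussianPDFReal μ v (t + 1) := by simp
    _ ≤ ∫ x in Set.Icc t (t + 1), gaussianPDFReal μ v x := by
        refine setIntegral_mono_on (integrableOn_const (by simp))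
          (integrable_gaussianPDFReal μ v).integrableOn measurableSet_Icc fun x hx => ?_
        exact gaussianPDFReal_le_of_sq_le μ v (by nlinarith [hx.1, hx.2])
    _ ≤ ∫ x in Set.Ici t, gaussianPDFReal μ v x :=
        setIntegral_mono_set (integrable_gaussianPDFReal μ v).integrableOn
          (.of_forall (gaussianPDFReal_nonneg μ v)) (.of_forall fun x hx => hx.1)
    _ = (gaussianReal μ v).real {x | t ≤ x} := by
        change _ = (gaussianReal μ v).real (Set.Ici t)
        rw [measureReal_def, gaussianReal_apply_eq_integral μ hv, ENNReal.toReal_ofReal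
          (setIntegral_nonneg measurableSet_Ici fun x _ => gaussianPDFReal_nonneg μ v x)]

lemma log_gaussianPDFReal (μ : ℝ) {v : ℝ≥0} (hv : v ≠ 0) (x : ℝ) :
    log (gaussianPDFReal μ v x) = -log √(2 * π * v) - (x - μ) ^ 2 / (2 * v) := by
  rw [gaussianPDFReal, log_mul (by positivity) (exp_ne_zero _), log_inv, log_exp]
  ring

lemma tendsto_exp_div_gaussianPDFReal_rpow (μ ν : ℝ) {v : ℝ≥0} (hv : v ≠ 0) {β : ℝ}
    (hβ : β < 1) :
    Tendsto (fun t => exp (-(t - μ) ^ 2 / (2 * v)) / gaussianPDFReal ν v (t + 1) ^ β)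
      atTop (𝓝 0) := by
  have hv' : (0 : ℝ) < v := by positivity
  have hexponent : Tendsto (fun t : ℝ => (β - 1) / (2 * v) * t ^ 2 + (μ + β * (1 - ν)) / v * t
      + ((β * (1 - ν) ^ 2 - μ ^ 2) / (2 * v) + β * log √(2 * π * v))) atTop atBot :=
    tendsto_quadratic_atBot (div_neg_of_neg_of_pos (by linarith) (by positivity))
  refine (tendsto_exp_atBot.comp hexponent).congr fun t => ?_
  rw [Function.comp_apply, rpow_def_of_pos (gaussianPDFReal_pos ν v _ hv),
    log_gaussianPDFReal ν hv, ← exp_sub]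
  congr 1
  field_simp
  ring

lemma tendsto_gaussianReal_real_Ici_div_rpow (μ ν : ℝ) {v : ℝ≥0} (hv : v ≠ 0) {β : ℝ}
    (hβ₀ : 0 ≤ β) (hβ₁ : β < 1) :
    Tendsto (fun t => (gaussianReal μ v).real {x | t ≤ x} /
      (gaussianReal ν v).real {x | t ≤ x} ^ β) atTop (𝓝 0) := by
  refine squeeze_zero' (.of_forall fun t => by positivity) ?_
    (tendsto_exp_div_gaussianPDFReal_rpow μ ν hv hβ₁)
  filter_upwards [eventually_ge_atTop μ, eventually_ge_atTop ν] with t hμ hν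
  have hpdf := gaussianPDFReal_pos ν v (t + 1) hv
  gcongr
  · exact gaussianReal_real_Ici_le_exp μ v hμ
  · exact gaussianPDFReal_le_gaussianReal_real_Ici ν v hν

end ProbabilityTheory

/-- The Neyman–Pearson TPR decays strictly faster than the Hölder ceiling:
with `β* = 2/(2+Δ²)` and `C* = exp(Δ²/2)`, the ratio
`N(Δ,1)([t,∞)) / (C* · N(0,1)([t,∞))^{β*})` tends to `0` as `t → ∞`. -/
theorem np_faster_than_holder_ceiling (Δ : ℝ) (hΔ : 0 < Δ) :
    Filter.Tendsto
      (fun t : ℝ =>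
        ((gaussianReal Δ 1) {x : ℝ | t ≤ x}).toReal /
          (Real.exp (Δ ^ 2 / 2) *
            ((gaussianReal 0 1) {x : ℝ | t ≤ x}).toReal ^ (2 / (2 + Δ ^ 2))))
      Filter.atTop (nhds 0) := by
  have hβ : 2 / (2 + Δ ^ 2) < 1 := by
    rw [div_lt_one (by positivity)]
    nlinarith
  have h := (tendsto_gaussianReal_real_Ici_div_rpow Δ 0 one_ne_zero (by positivity) hβ).div_const
    (exp (Δ ^ 2 / 2))
  rw [zero_div] at h
  simpa only [measureReal_def, div_mul_eq_div_div_swap] using h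
end

section
/- Fix Δ > 0 and let N(μ,1) denote the Gaussian measure on ℝ with mean μ and variance 1. Then log N(Δ,1)({x : x ≥ t}) / log N(0,1)({x : x ≥ t}) → 1 as t → ∞. Equivalently, writing δ(t) = N(0,1)({x : x ≥ t}) and TPR(t) = N(Δ,1)({x : x ≥ t}), the log-exponent log TPR / log δ of the Neyman–Pearson classifier tends to 1 as δ → 0, exceeding every Hölder exponent β < 1. -/
/-!
For `X ~ N(μ, v)` and `t ≥ μ`, the Chernoff bound with the Gaussian moment generating function
gives `P(X ≥ t) ≤ exp (-(t - μ)² / 2v)`, while integrating the decreasing density `φ` over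
`[t, t + 1]` gives `P(X ≥ t) ≥ φ(t + 1)`. Both logarithms are `-t² / 2v + O(t)`, so
`log P(X ≥ t) ~ -t² / 2v` whatever the mean, and the ratio of two such logarithms tends to `1`.
-/

open MeasureTheory ProbabilityTheory
open scoped ENNReal NNReal
open Real Set Filter Asymptotics

theorem Asymptotics.IsEquivalent.of_le_of_le {α : Type*} {l : Filter α} {f g u w : α → ℝ}
    (hf : f ~[l] w) (hg : g ~[l] w) (hfu : f ≤ᶠ[l] u) (hug : u ≤ᶠ[l] g) : u ~[l] w := by
  have hsum : (fun x ↦ |f x - w x| + |g x - w x|) =o[l] w :=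
    hf.isLittleO.abs_left.add hg.isLittleO.abs_left
  refine IsLittleO.isEquivalent (IsBigO.trans_isLittleO (IsBigO.of_bound 1 ?_) hsum)
  filter_upwards [hfu, hug] with x hf hg
  rw [one_mul, Real.norm_eq_abs, Real.norm_of_nonneg (by positivity), Pi.sub_apply, abs_le]
  constructor <;> linarith [le_abs_self (g x - w x), neg_abs_le (f x - w x),
    abs_nonneg (f x - w x), abs_nonneg (g x - w x)]

lemma tendsto_neg_sq_div_atBot {c : ℝ} (hc : 0 < c) :
    Tendsto (fun t : ℝ ↦ -t ^ 2 / c) atTop atBot :=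
  (tendsto_neg_atTop_atBot.comp (tendsto_pow_atTop two_ne_zero)).atBot_div_const hc

lemma isEquivalent_neg_add_sq_div (a c : ℝ) :
    (fun t : ℝ ↦ -(t + a) ^ 2 / c) ~[atTop] fun t ↦ -t ^ 2 / c := by
  have h : (fun t : ℝ ↦ t + a) ~[atTop] id :=
    IsEquivalent.refl.add_const_of_norm_tendsto_atTop tendsto_norm_atTop_atTop
  exact ((h.pow 2).neg.div IsEquivalent.refl : _ ~[atTop] fun t ↦ -t ^ 2 / c)

namespace ProbabilityTheory

lemma gaussianPDFReal_antitoneOn (μ : ℝ) (v : ℝ≥0) :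
    AntitoneOn (gaussianPDFReal μ v) (Ici μ) := by
  intro x hx y _ hxy
  simp only [gaussianPDFReal]
  have : 0 ≤ x - μ := sub_nonneg.2 hx
  gcongr

lemma gaussianPDFReal_le_measureReal_Ici (μ : ℝ) {v : ℝ≥0} (hv : v ≠ 0) {t : ℝ}
    (ht : μ ≤ t) :
    gaussianPDFReal μ v (t + 1) ≤ (gaussianReal μ v).real (Ici t) := by
  have hpdf : ∀ x ∈ Icc t (t + 1), gaussianPDFReal μ v (t + 1) ≤ gaussianPDFReal μ v x :=
    fun x hx ↦ gaussianPDFReal_antitoneOn μ v (ht.trans hx.1) (by simp; linarith) hx.2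
  calc gaussianPDFReal μ v (t + 1)
      = gaussianPDFReal μ v (t + 1) * volume.real (Icc t (t + 1)) := by simp
    _ ≤ ∫ x in Icc t (t + 1), gaussianPDFReal μ v x :=
      setIntegral_ge_of_const_le_real measurableSet_Icc (by simp) hpdf
        (integrable_gaussianPDFReal μ v).integrableOn
    _ = (gaussianReal μ v).real (Icc t (t + 1)) := by
      rw [measureReal_def, gaussianReal_apply_eq_integral μ hv, ENNReal.toReal_ofReal
        (setIntegral_nonneg measurableSet_Icc fun x _ ↦ gaussianPDFReal_nonneg μ v x)]
    _ ≤ (gaussianReal μ v).real (Ici t) := measureReal_mono Icc_subset_Ici_self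

lemma measureReal_Ici_le_exp (μ : ℝ) {v : ℝ≥0} (hv : v ≠ 0) {t : ℝ} (ht : μ ≤ t) :
    (gaussianReal μ v).real (Ici t) ≤ exp (-(t - μ) ^ 2 / (2 * v)) := by
  have hv' : (0 : ℝ) < v := by positivity
  calc (gaussianReal μ v).real (Ici t)
      ≤ exp (-((t - μ) / v) * t) * mgf id (gaussianReal μ v) ((t - μ) / v) :=
        measure_ge_le_exp_mul_mgf t (div_nonneg (sub_nonneg.2 ht) hv'.le)
          (integrable_exp_mul_gaussianReal _)
    _ = exp (-(t - μ) ^ 2 / (2 * v)) := by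
      rw [mgf_id_gaussianReal, ← exp_add]
      congr 1
      field_simp
      ring

theorem log_measureReal_Ici_isEquivalent (μ : ℝ) {v : ℝ≥0} (hv : v ≠ 0) :
    (fun t ↦ log ((gaussianReal μ v).real (Ici t))) ~[atTop] fun t ↦ -t ^ 2 / (2 * v) := by
  have hv' : (0 : ℝ) < 2 * v := by positivity
  have hpos : ∀ t, μ ≤ t → 0 < (gaussianReal μ v).real (Ici t) := fun t ht ↦
    (gaussianPDFReal_pos μ v _ hv).trans_le (gaussianPDFReal_le_measureReal_Ici μ hv ht)
  have hlower : (fun t ↦ log (√(2 * π * v))⁻¹ + -(t + (1 - μ)) ^ 2 / (2 * v))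
      ≤ᶠ[atTop] fun t ↦ log ((gaussianReal μ v).real (Ici t)) := by
    filter_upwards [eventually_ge_atTop μ] with t ht
    have := log_le_log (gaussianPDFReal_pos μ v _ hv) (gaussianPDFReal_le_measureReal_Ici μ hv ht)
    rwa [gaussianPDFReal, log_mul (by positivity) (exp_ne_zero _), log_exp,
      add_sub_assoc] at this
  have hupper : (fun t ↦ log ((gaussianReal μ v).real (Ici t)))
      ≤ᶠ[atTop] fun t ↦ -(t + -μ) ^ 2 / (2 * v) := by
    filter_upwards [eventually_ge_atTop μ] with t ht
    rw [← sub_eq_add_neg, ← log_exp (-(t - μ) ^ 2 / (2 * v))]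
    exact log_le_log (hpos t ht) (measureReal_Ici_le_exp μ hv ht)
  refine IsEquivalent.of_le_of_le ?_ (isEquivalent_neg_add_sq_div _ _) hlower hupper
  exact (isEquivalent_neg_add_sq_div _ _).const_add_of_norm_tendsto_atTop
    (tendsto_abs_atBot_atTop.comp (tendsto_neg_sq_div_atBot hv'))

end ProbabilityTheory

theorem np_log_exponent_tendsto_one_general (Δ : ℝ) :
    Filter.Tendsto
      (fun t : ℝ =>
        Real.log ((gaussianReal Δ 1) {x : ℝ | t ≤ x}).toReal /
          Real.log ((gaussianReal 0 1) {x : ℝ | t ≤ x}).toReal)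
      Filter.atTop (nhds 1) := by
  have hΔ := log_measureReal_Ici_isEquivalent Δ one_ne_zero
  have h0 := log_measureReal_Ici_isEquivalent 0 one_ne_zero
  have hne : ∀ᶠ t in atTop, log ((gaussianReal 0 1).real (Ici t)) ≠ 0 :=
    (h0.eventually_neg ((tendsto_neg_sq_div_atBot (by positivity)).eventually_lt_atBot 0)).mono
      fun _ h ↦ h.ne
  exact (isEquivalent_iff_tendsto_one hne).mp (hΔ.trans h0.symm)

/-- The log-exponent of the Neyman–Pearson classifier tends to 1: for the
Gaussian pair `N(Δ,1)` vs `N(0,1)`,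
`log N(Δ,1)([t,∞)) / log N(0,1)([t,∞)) → 1` as `t → ∞`. -/
theorem np_log_exponent_tendsto_one (Δ : ℝ) (hΔ : 0 < Δ) :
    Filter.Tendsto
      (fun t : ℝ =>
        Real.log ((gaussianReal Δ 1) {x : ℝ | t ≤ x}).toReal /
          Real.log ((gaussianReal 0 1) {x : ℝ | t ≤ x}).toReal)
      Filter.atTop (nhds 1) :=
  np_log_exponent_tendsto_one_general Δ
end

section
/- Let P⁺ and P⁻ be probability measures with P⁺ ≪ P⁻ and let L = dP⁺/dP⁻ be the likelihood ratio. Let c > 0 and p > 1, and suppose (c_n)_{n≥1} is a sequence of thresholds such that P⁻({x : L(x) > c_n}) = c·n^{−p} for every n ≥ 1. Then ∑_{n=1}^∞ P⁺({x : L(x) > c_n}) ≤ c^{1/p} · ∫ (P⁻({y : L(y) > L(x)}))^{−1/p} dP⁺(x). (NP counting impossibility: the total true positive rate of the Neyman–Pearson tests at power-law levels δ_n = c/n^p is bounded by c^{1/p}·E_{P⁺}[U(X)^{−1/p}], where U(x) = P⁻(L > L(x)) is the p-value function.) -/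
open MeasureTheory
open scoped ENNReal

/-- NP counting impossibility: with `P ≪ Q`, likelihood ratio `L = dP/dQ`, and
thresholds `c_n` (indexed so step `n ≥ 1` corresponds to index `n-1`) chosen so
that `Q(L > c_n) = c · n^{-p}` with `c > 0`, `p > 1`, the total true positive
rate of the Neyman–Pearson tests is bounded by
`c^{1/p} · ∫ (Q(L > L(x)))^{-1/p} dP(x)`. -/
theorem np_counting_impossibility {Ω : Type*} [MeasurableSpace Ω]
    (P Q : Measure Ω) [IsProbabilityMeasure P] [IsProbabilityMeasure Q]
    (hac : P ≪ Q) (c p : ℝ) (hc : 0 < c) (hp : 1 < p)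
    (cth : ℕ → ℝ≥0∞)
    (hcth : ∀ n : ℕ,
      Q {x | cth n < P.rnDeriv Q x} = ENNReal.ofReal (c * ((n : ℝ) + 1) ^ (-p))) :
    ∑' n : ℕ, P {x | cth n < P.rnDeriv Q x}
      ≤ ENNReal.ofReal (c ^ (1 / p)) *
        ∫⁻ x, (Q {y | P.rnDeriv Q x < P.rnDeriv Q y}) ^ (-(1 / p)) ∂P := by
  have hfm : Measurable (P.rnDeriv Q) := Measure.measurable_rnDeriv P Q
  set f := P.rnDeriv Q with hf
  set A : ℕ → Set Ω := fun n => {x | cth n < f x} with hA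
  have hAm : ∀ n, MeasurableSet (A n) := fun n =>
    measurableSet_lt measurable_const hfm
  set U : Ω → ℝ≥0∞ := fun x => Q {y | f x < f y} with hU
  have hp0 : (0:ℝ) < p := lt_trans one_pos hp
  have hneg : -(1/p) < 0 := by
    have : (0:ℝ) < 1/p := by positivity
    linarith
  have key : ∀ x, ∑' n, (A n).indicator (1 : Ω → ℝ≥0∞) x
      ≤ ENNReal.ofReal (c ^ (1/p)) * (U x) ^ (-(1/p)) := by
    intro x
    by_cases hUx : U x = 0
    · rw [hUx, ENNReal.zero_rpow_of_neg hneg, ENNReal.mul_top]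
      · exact le_top
      · exact ne_of_gt (ENNReal.ofReal_pos.mpr (Real.rpow_pos_of_pos hc _))
    · have hUle : U x ≤ 1 := prob_le_one
      have hUtop : U x ≠ ⊤ := ne_top_of_le_ne_top ENNReal.one_ne_top hUle
      set u := (U x).toReal with hu
      have hu0 : 0 < u := ENNReal.toReal_pos hUx hUtop
      set K := (c / u) ^ (1/p) with hK
      have hK0 : 0 ≤ K := Real.rpow_nonneg (by positivity) _
      set N := ⌊K⌋₊ with hN
      have hmem : ∀ n, x ∈ A n → n < N := by
        intro n hn
        have hsub : {y | f x < f y} ⊆ A n := fun y hy => show cth n < f y from lt_trans hn hy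
        have h1 : U x ≤ ENNReal.ofReal (c * ((n:ℝ)+1) ^ (-p)) :=
          (hcth n) ▸ measure_mono hsub
        have hn1 : (0:ℝ) < (n:ℝ)+1 := by positivity
        have h2 : u ≤ c * ((n:ℝ)+1) ^ (-p) :=
          ENNReal.toReal_le_of_le_ofReal
            (by positivity) h1
        have hpow : (0:ℝ) < ((n:ℝ)+1) ^ p := Real.rpow_pos_of_pos hn1 p
        have h3 : ((n:ℝ)+1) ^ p ≤ c / u := by
          rw [le_div_iff₀ hu0]
          rw [Real.rpow_neg hn1.le] at h2
          have h2' : u * ((n:ℝ)+1) ^ p ≤ c := by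
            calc u * ((n:ℝ)+1) ^ p
                ≤ (c * (((n:ℝ)+1) ^ p)⁻¹) * ((n:ℝ)+1) ^ p :=
                  mul_le_mul_of_nonneg_right h2 hpow.le
              _ = c := by field_simp
          rw [mul_comm]; exact h2'
        have h4 : (n:ℝ)+1 ≤ K := by
          have h5 : (((n:ℝ)+1) ^ p) ^ (1/p) ≤ (c / u) ^ (1/p) :=
            Real.rpow_le_rpow hpow.le h3 (by positivity)
          have h6 : (((n:ℝ)+1) ^ p) ^ (1/p) = (n:ℝ)+1 := by
            rw [← Real.rpow_mul hn1.le]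
            rw [mul_one_div, div_self (ne_of_gt hp0), Real.rpow_one]
          rw [h6] at h5
          exact h5
        have h7 : n + 1 ≤ N := Nat.le_floor (by push_cast; exact h4)
        omega
      have hsum : ∑' n, (A n).indicator (1 : Ω → ℝ≥0∞) x
          = ∑ n ∈ Finset.range N, (A n).indicator (1 : Ω → ℝ≥0∞) x := by
        refine tsum_eq_sum ?_
        intro n hn
        have hx : x ∉ A n := fun hxA => hn (Finset.mem_range.mpr (hmem n hxA))
        simp [Set.indicator_of_notMem hx]
      rw [hsum]
      calc ∑ n ∈ Finset.range N, (A n).indicator (1 : Ω → ℝ≥0∞) x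
          ≤ ∑ _n ∈ Finset.range N, (1:ℝ≥0∞) :=
            Finset.sum_le_sum fun n _ => Set.indicator_le_self _ _ x
        _ = (N : ℝ≥0∞) := by simp
        _ ≤ ENNReal.ofReal K := by
            rw [← ENNReal.ofReal_natCast N]
            exact ENNReal.ofReal_le_ofReal (Nat.floor_le hK0)
        _ = ENNReal.ofReal (c ^ (1/p)) * (U x) ^ (-(1/p)) := by
            rw [hK, Real.div_rpow hc.le hu0.le, div_eq_mul_inv,
              ← Real.rpow_neg hu0.le,
              ENNReal.ofReal_mul (Real.rpow_nonneg hc.le _),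
              ← ENNReal.ofReal_rpow_of_pos hu0, ENNReal.ofReal_toReal hUtop]
  calc ∑' n : ℕ, P (A n)
      = ∑' n : ℕ, ∫⁻ x, (A n).indicator (1 : Ω → ℝ≥0∞) x ∂P :=
        tsum_congr fun n => (lintegral_indicator_one (hAm n)).symm
    _ = ∫⁻ x, ∑' n, (A n).indicator (1 : Ω → ℝ≥0∞) x ∂P :=
        (lintegral_tsum fun n => (measurable_one.indicator (hAm n)).aemeasurable).symm
    _ ≤ ∫⁻ x, ENNReal.ofReal (c ^ (1/p)) * (U x) ^ (-(1/p)) ∂P :=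
        lintegral_mono key
    _ = ENNReal.ofReal (c ^ (1/p)) * ∫⁻ x, (U x) ^ (-(1/p)) ∂P :=
        lintegral_const_mul' _ _ ENNReal.ofReal_ne_top
end

section
/- Let P⁺ and P⁻ be probability measures with P⁺ ≪ P⁻ and let L = dP⁺/dP⁻ be the Radon–Nikodym derivative. Fix t ∈ [0, ∞) and let B = {x : L(x) ≥ t}. Then every measurable set A with P⁻(A) ≤ P⁻(B) satisfies P⁺(A) ≤ P⁺(B). (Neyman–Pearson optimality: among all acceptance regions with false acceptance rate at most that of the likelihood-ratio threshold test, the threshold test maximizes the true positive rate.) -/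
open MeasureTheory
open scoped ENNReal NNReal

/-- Neyman–Pearson optimality: with `P ≪ Q` and likelihood ratio
`L = dP/dQ`, the threshold test `B = {x : t ≤ L x}` (for a finite threshold
`t ∈ [0,∞)`) maximizes the true positive rate among all measurable acceptance
regions with false acceptance rate at most `Q B`. -/
theorem neyman_pearson_optimality {Ω : Type*} [MeasurableSpace Ω]
    (P Q : Measure Ω) [IsProbabilityMeasure P] [IsProbabilityMeasure Q]
    (hac : P ≪ Q) (t : ℝ≥0∞) (ht : t ≠ ∞)
    (B : Set Ω) (hB : B = {x | t ≤ P.rnDeriv Q x})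
    (A : Set Ω) (hA : MeasurableSet A) (hQA : Q A ≤ Q B) :
    P A ≤ P B := by
  have hLmeas : Measurable (P.rnDeriv Q) := Measure.measurable_rnDeriv P Q
  have hBmeas : MeasurableSet B := by
    rw [hB]; exact measurableSet_le measurable_const hLmeas
  have hPs : ∀ s : Set Ω, MeasurableSet s → P s = ∫⁻ x in s, P.rnDeriv Q x ∂Q := by
    intro s hs
    rw [Measure.setLIntegral_rnDeriv hac]
  have h1 : P (A \ B) ≤ t * Q (A \ B) := by
    rw [hPs _ (hA.diff hBmeas)]
    calc ∫⁻ x in A \ B, P.rnDeriv Q x ∂Q ≤ ∫⁻ _ in A \ B, t ∂Q := by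
          refine setLIntegral_mono' (hA.diff hBmeas) ?_
          intro x hx
          have : ¬ (t ≤ P.rnDeriv Q x) := by
            intro h; exact hx.2 (hB ▸ h)
          exact (not_le.mp this).le
      _ = t * Q (A \ B) := by rw [setLIntegral_const]
  have h2 : t * Q (B \ A) ≤ P (B \ A) := by
    rw [hPs _ (hBmeas.diff hA)]
    calc t * Q (B \ A) = ∫⁻ _ in B \ A, t ∂Q := (setLIntegral_const _ _).symm
      _ ≤ ∫⁻ x in B \ A, P.rnDeriv Q x ∂Q := by
          refine setLIntegral_mono' (hBmeas.diff hA) ?_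
          intro x hx
          have := hx.1
          rw [hB] at this
          exact this
  have hQ' : Q (A \ B) ≤ Q (B \ A) := by
    have hA' : Q A = Q (A ∩ B) + Q (A \ B) := (measure_inter_add_diff A hBmeas).symm
    have hB' : Q B = Q (A ∩ B) + Q (B \ A) := by
      rw [Set.inter_comm]; exact (measure_inter_add_diff B hA).symm
    rw [hA', hB'] at hQA
    exact (ENNReal.add_le_add_iff_left (measure_ne_top Q _)).mp hQA
  have key : P (A \ B) ≤ P (B \ A) :=
    h1.trans ((mul_le_mul_right hQ' t).trans h2)
  have hPA : P A = P (A ∩ B) + P (A \ B) := (measure_inter_add_diff A hBmeas).symm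
  have hPB : P B = P (A ∩ B) + P (B \ A) := by
    rw [Set.inter_comm]; exact (measure_inter_add_diff B hA).symm
  rw [hPA, hPB]
  exact add_le_add le_rfl key
end

section
/- For each n, let TPR_n, δ_n ∈ [0,1], and let μ_n be the probability measure on {0,1}×{0,1} given by μ_n({(1,1)}) = TPR_n/2, μ_n({(1,0)}) = (1−TPR_n)/2, μ_n({(0,1)}) = δ_n/2, μ_n({(0,0)}) = (1−δ_n)/2 (the joint law of the safety label, uniform prior, and the gate decision). Let I_n = KL(μ_n ‖ μ_n^{(1)} ⊗ μ_n^{(2)}) be the mutual information, i.e., the Kullback–Leibler divergence between μ_n and the product of its two marginals. Then for every N ≥ 1 with ∑_{n=1}^N I_n ≤ I₀: ∑_{n=1}^N TPR_n ≤ ∑_{n=1}^N δ_n + √(2·N·I₀). (Information-theoretic finite-horizon bound: per-step, Pinsker's inequality gives |TPR_n − δ_n| ≤ √(2 I_n), and Cauchy–Schwarz gives the summed bound.) -/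
/-!
Computing the mutual information of the channel shows that it is the average of the binary
divergences `kl(TPR_n ‖ m_n)` and `kl(δ_n ‖ m_n)` from the acceptance rate
`m_n = (TPR_n + δ_n) / 2`. Binary Pinsker bounds each of them below by `(TPR_n - δ_n)² / 2`,
so `(TPR_n - δ_n)² ≤ 2 I_n`, and Cauchy–Schwarz turns the budget `∑ I_n ≤ I₀` into
`∑ (TPR_n - δ_n) ≤ √(2 N I₀)`.
-/

open MeasureTheory
open scoped ENNReal NNReal

/-- Kullback–Leibler divergence between two measures on a finite discrete
measurable space, `KL(μ‖ν) = ∑ₐ μ{a} · log (μ{a}/ν{a})`. -/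
noncomputable def discreteKL {α : Type*} [Fintype α] [MeasurableSpace α]
    [MeasurableSingletonClass α] (μ ν : Measure α) : ℝ :=
  ∑ a : α, (μ {a}).toReal * Real.log ((μ {a}).toReal / (ν {a}).toReal)

/-- The joint law on `{safe, unsafe} × {accept, reject}` (encoded as
`Bool × Bool`, with `true = safe`/`accept`) of the safety label under the
uniform prior and the gate decision: mass `TPR/2` at `(1,1)`, `(1-TPR)/2` at
`(1,0)`, `δ/2` at `(0,1)`, `(1-δ)/2` at `(0,0)`. -/
noncomputable def jointLaw (tpr δ : ℝ) : Measure (Bool × Bool) :=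
  ENNReal.ofReal (tpr / 2) • Measure.dirac (true, true) +
    ENNReal.ofReal ((1 - tpr) / 2) • Measure.dirac (true, false) +
    ENNReal.ofReal (δ / 2) • Measure.dirac (false, true) +
    ENNReal.ofReal ((1 - δ) / 2) • Measure.dirac (false, false)

open Real Set Finset

noncomputable def binaryKL (p q : ℝ) : ℝ :=
  p * log (p / q) + (1 - p) * log ((1 - p) / (1 - q))

lemma binaryKL_one_sub (p q : ℝ) : binaryKL (1 - p) (1 - q) = binaryKL p q := by
  simp only [binaryKL, sub_sub_cancel]; ring

lemma binaryKL_self (p : ℝ) : binaryKL p p = 0 := by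
  simp only [binaryKL]
  rcases eq_or_ne p 0 with rfl | hp
  · simp
  rcases eq_or_ne p 1 with rfl | hp1
  · simp
  rw [div_self hp, div_self (sub_ne_zero.2 (Ne.symm hp1))]; simp

lemma two_mul_sq_sub_le_binaryKL_of_le {p q : ℝ} (hp : 0 ≤ p) (hpq : p ≤ q) (hq : q < 1) :
    2 * (p - q) ^ 2 ≤ binaryKL p q := by
  set G : ℝ → ℝ := fun x => -(p * log x) - (1 - p) * log (1 - x) - 2 * (p - x) ^ 2
  have hkl : ∀ x ∈ Icc p q, binaryKL p x - 2 * (p - x) ^ 2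
      = p * log p + (1 - p) * log (1 - p) + G x := by
    rintro x ⟨hpx, hxq⟩
    rcases hp.eq_or_lt with rfl | hp0
    · simp [binaryKL, G]
    · rw [binaryKL, log_div hp0.ne' (by linarith), log_div (by linarith) (by linarith)]; ring
  -- `x (1 - x) ≤ 1 / 4` makes `G` nondecreasing to the right of `p`.
  have hG : MonotoneOn G (Icc p q) := by
    refine monotoneOn_of_hasDerivWithinAt_nonneg (convex_Icc p q)
      (f' := fun x => (x - p) * (1 - 4 * x * (1 - x)) / (x * (1 - x))) ?_ ?_ ?_
    · have hlog : ContinuousOn (fun x => p * log x) (Icc p q) := by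
        rcases hp.eq_or_lt with rfl | hp0
        · simpa using continuousOn_const
        · exact continuousOn_const.mul (continuousOn_log.mono fun x hx => (hp0.trans_le hx.1).ne')
      exact (hlog.neg.sub (continuousOn_const.mul ((continuousOn_const.sub continuousOn_id).log
        fun x hx => by simp only [Pi.sub_apply, id]; linarith [hx.2]))).sub (by fun_prop)
    · intro x hx
      rw [interior_Icc] at hx
      have hx0 : 0 < x := by linarith [hx.1]
      have hx1 : 0 < 1 - x := by linarith [hx.2]
      refine HasDerivAt.hasDerivWithinAt ?_
      have := (((hasDerivAt_log hx0.ne').const_mul p).neg.sub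
        (((hasDerivAt_id x).const_sub 1).log hx1.ne' |>.const_mul (1 - p))).sub
        ((((hasDerivAt_id x).const_sub p).pow 2).const_mul 2)
      convert this using 1
      · ext y; simp [G]
      · simp only [id]; field_simp; ring
    · intro x hx
      rw [interior_Icc] at hx
      have hx0 : 0 < x := by linarith [hx.1]
      have hx1 : 0 < 1 - x := by linarith [hx.2]
      have : 0 ≤ 1 - 4 * x * (1 - x) := by nlinarith [sq_nonneg (2 * x - 1)]
      have : 0 ≤ x - p := by linarith [hx.1]
      positivity
  have := hG (left_mem_Icc.2 hpq) (right_mem_Icc.2 hpq) hpq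
  have h1 := hkl p (left_mem_Icc.2 hpq)
  have h2 := hkl q (right_mem_Icc.2 hpq)
  rw [binaryKL_self] at h1
  linarith

theorem two_mul_sq_sub_le_binaryKL {p q : ℝ} (hp : p ∈ Icc (0 : ℝ) 1) (hq : q ∈ Ioo (0 : ℝ) 1) :
    2 * (p - q) ^ 2 ≤ binaryKL p q := by
  rcases le_total p q with hpq | hqp
  · exact two_mul_sq_sub_le_binaryKL_of_le hp.1 hpq hq.2
  · have := two_mul_sq_sub_le_binaryKL_of_le (p := 1 - p) (q := 1 - q)
      (by linarith [hp.2]) (by linarith) (by linarith [hq.1])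
    rwa [binaryKL_one_sub, show 1 - p - (1 - q) = -(p - q) by ring, neg_sq] at this

instance (t d : ℝ) : IsFiniteMeasure (jointLaw t d) := ⟨by simp [jointLaw, ENNReal.add_lt_top]⟩

lemma MeasureTheory.Measure.fst_singleton_eq_add {α : Type*} [MeasurableSpace α] [MeasurableSingletonClass α]
    (μ : Measure (α × Bool)) (a : α) : μ.fst {a} = μ {(a, true)} + μ {(a, false)} := by
  rw [Measure.fst_apply (measurableSet_singleton a), ← measure_union (by simp)
    (measurableSet_singleton _)]
  congr 1
  ext ⟨x, y⟩
  cases y <;> simp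

lemma MeasureTheory.Measure.snd_singleton_eq_add {β : Type*} [MeasurableSpace β] [MeasurableSingletonClass β]
    (μ : Measure (Bool × β)) (b : β) : μ.snd {b} = μ {(true, b)} + μ {(false, b)} := by
  rw [Measure.snd_apply (measurableSet_singleton b), ← measure_union (by simp)
    (measurableSet_singleton _)]
  congr 1
  ext ⟨x, y⟩
  cases x <;> simp

lemma MeasureTheory.Measure.prod_singleton_toReal {α β : Type*} [MeasurableSpace α] [MeasurableSpace β]
    (μ : Measure α) (ν : Measure β) [SFinite ν] (a : α) (b : β) :
    (μ.prod ν {(a, b)}).toReal = (μ {a}).toReal * (ν {b}).toReal := by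
  rw [← singleton_prod_singleton, Measure.prod_prod, ENNReal.toReal_mul]

section jointLaw

variable {t d : ℝ} (ht : t ∈ Icc (0 : ℝ) 1) (hd : d ∈ Icc (0 : ℝ) 1)
include ht hd

lemma jointLaw_singleton (a b : Bool) : (jointLaw t d {(a, b)}).toReal
    = (if a then (if b then t else 1 - t) else (if b then d else 1 - d)) / 2 := by
  obtain ⟨ht0, ht1⟩ := ht
  obtain ⟨hd0, hd1⟩ := hd
  cases a <;> cases b <;> simp [jointLaw] <;> linarith

lemma jointLaw_fst_singleton (a : Bool) : ((jointLaw t d).fst {a}).toReal = 1 / 2 := by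
  rw [Measure.fst_singleton_eq_add, ENNReal.toReal_add (measure_ne_top _ _) (measure_ne_top _ _),
    jointLaw_singleton ht hd, jointLaw_singleton ht hd]
  cases a <;> simp only [Bool.false_eq_true, ↓reduceIte] <;> ring

lemma jointLaw_snd_singleton (b : Bool) :
    ((jointLaw t d).snd {b}).toReal = if b then (t + d) / 2 else 1 - (t + d) / 2 := by
  rw [Measure.snd_singleton_eq_add, ENNReal.toReal_add (measure_ne_top _ _) (measure_ne_top _ _),
    jointLaw_singleton ht hd, jointLaw_singleton ht hd]
  cases b <;> simp only [Bool.false_eq_true, ↓reduceIte] <;> ring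

lemma discreteKL_jointLaw :
    discreteKL (jointLaw t d) ((jointLaw t d).fst.prod (jointLaw t d).snd)
      = (binaryKL t ((t + d) / 2) + binaryKL d ((t + d) / 2)) / 2 := by
  have hdiv : ∀ x y : ℝ, x / 2 / (1 / 2 * y) = x / y := fun x y => by
    rw [one_div, ← div_eq_inv_mul, div_div_div_cancel_right₀ two_ne_zero]
  simp only [discreteKL, Fintype.sum_prod_type, Fintype.sum_bool, Measure.prod_singleton_toReal,
    jointLaw_singleton ht hd, jointLaw_fst_singleton ht hd, jointLaw_snd_singleton ht hd,
    Bool.false_eq_true, ↓reduceIte, hdiv, binaryKL]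
  ring

lemma sq_sub_le_two_mul_discreteKL_jointLaw :
    (t - d) ^ 2 ≤ 2 * discreteKL (jointLaw t d) ((jointLaw t d).fst.prod (jointLaw t d).snd) := by
  rw [discreteKL_jointLaw ht hd]
  rcases eq_or_ne t d with rfl | htd
  · simp [binaryKL_self]
  have hm : (t + d) / 2 ∈ Ioo (0 : ℝ) 1 := by
    rcases htd.lt_or_gt with h | h <;> constructor <;> linarith [ht.1, ht.2, hd.1, hd.2]
  have h1 := two_mul_sq_sub_le_binaryKL ht hm
  have h2 := two_mul_sq_sub_le_binaryKL hd hm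
  linarith

end jointLaw

theorem Finset.sum_le_sum_add_sqrt_card_mul {ι : Type*} (s : Finset ι) {f g : ι → ℝ} {C : ℝ}
    (h : ∑ i ∈ s, (f i - g i) ^ 2 ≤ C) :
    ∑ i ∈ s, f i ≤ ∑ i ∈ s, g i + √(#s * C) := by
  have hcs := Real.sum_mul_le_sqrt_mul_sqrt s (fun _ => 1) (fun i => f i - g i)
  simp only [one_mul, one_pow, sum_const, nsmul_eq_mul, mul_one, sum_sub_distrib] at hcs
  have : √(#s : ℝ) * √(∑ i ∈ s, (f i - g i) ^ 2) ≤ √(#s * C) := by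
    rw [← Real.sqrt_mul (Nat.cast_nonneg _)]
    gcongr
  linarith

theorem info_theoretic_finite_horizon_bound_general
    (TPR δ : ℕ → ℝ)
    (hTPR : ∀ n, TPR n ∈ Set.Icc (0 : ℝ) 1) (hδ : ∀ n, δ n ∈ Set.Icc (0 : ℝ) 1)
    (I : ℕ → ℝ)
    (hI : ∀ n, I n = discreteKL (jointLaw (TPR n) (δ n))
      ((jointLaw (TPR n) (δ n)).fst.prod ((jointLaw (TPR n) (δ n)).snd)))
    (I₀ : ℝ) (N : ℕ)
    (hbudget : ∑ n ∈ Finset.range N, I n ≤ I₀) :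
    ∑ n ∈ Finset.range N, TPR n
      ≤ ∑ n ∈ Finset.range N, δ n + Real.sqrt (2 * N * I₀) := by
  have hsq : ∑ n ∈ range N, (TPR n - δ n) ^ 2 ≤ 2 * I₀ :=
    calc ∑ n ∈ range N, (TPR n - δ n) ^ 2
        ≤ ∑ n ∈ range N, 2 * I n := sum_le_sum fun n _ =>
          hI n ▸ sq_sub_le_two_mul_discreteKL_jointLaw (hTPR n) (hδ n)
      _ = 2 * ∑ n ∈ range N, I n := (mul_sum _ _ _).symm
      _ ≤ 2 * I₀ := by linarith
  calc ∑ n ∈ range N, TPR n ≤ ∑ n ∈ range N, δ n + √(#(range N) * (2 * I₀)) :=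
        sum_le_sum_add_sqrt_card_mul _ hsq
    _ = ∑ n ∈ range N, δ n + √(2 * N * I₀) := by rw [card_range, mul_left_comm, mul_assoc]

/-- Information-theoretic finite-horizon bound: if `I n` is the mutual
information of the gate's channel at step `n` (the KL divergence between the
joint law and the product of its marginals) and `∑_{n<N} I n ≤ I₀`, then
`∑_{n<N} TPR_n ≤ ∑_{n<N} δ_n + √(2·N·I₀)`. -/
theorem info_theoretic_finite_horizon_bound
    (TPR δ : ℕ → ℝ)
    (hTPR : ∀ n, TPR n ∈ Set.Icc (0 : ℝ) 1) (hδ : ∀ n, δ n ∈ Set.Icc (0 : ℝ) 1)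
    (I : ℕ → ℝ)
    (hI : ∀ n, I n = discreteKL (jointLaw (TPR n) (δ n))
      ((jointLaw (TPR n) (δ n)).fst.prod ((jointLaw (TPR n) (δ n)).snd)))
    (I₀ : ℝ) (N : ℕ) (hN : 1 ≤ N)
    (hbudget : ∑ n ∈ Finset.range N, I n ≤ I₀) :
    ∑ n ∈ Finset.range N, TPR n
      ≤ ∑ n ∈ Finset.range N, δ n + Real.sqrt (2 * N * I₀) :=
  info_theoretic_finite_horizon_bound_general TPR δ hTPR hδ I hI I₀ N hbudget
end
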